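/- The multiplicative Brunn–Minkowski theorem: if K ⊆ ℝⁿ × ℝᵐ is a convex body and K_t denotes the slice {x ∈ ℝⁿ : (x,t) ∈ K}, then t ↦ log(vol_n(K_t)) is a concave function on the projection of K to ℝᵐ (with the convention log 0 = -∞). -/

import Mathlib

/-!
Induction on `n`. Splitting off the first coordinate `r` of `x ∈ ℝⁿ⁺¹`, Fubini writes `vol (K_t)`
as `∫ vol (K_{(r, t)}) dr`, where `K_{(r, t)}` are the slices of the same body viewed inside
`ℝⁿ × (ℝ × ℝᵐ)`; hence the induction runs over an arbitrary parameter space in place of `ℝᵐ`.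
By induction `r ↦ vol (K_{(r, t)})` satisfies the hypothesis of the one-dimensional
Prékopa–Leindler inequality, whose conclusion is the claim.

Prékopa–Leindler on `ℝ` is proved by normalizing `f` and `g` by their suprema: their superlevel
sets at the same normalized height are then nonempty together, their weighted Minkowski sum lies
in a superlevel set of `h`, and the one-dimensional Brunn–Minkowski inequality
`|A| + |B| ≤ |A + B|` integrated over the height (layer cake) gives the weighted arithmetic mean
of the normalized integrals, which dominates their geometric mean.
-/

open MeasureTheory Set
open scoped NNReal ENNReal Pointwise

theorem ENNReal.geom_mean_le_arith_mean2_weighted {w₁ w₂ : ℝ} (hw₁ : 0 < w₁) (hw₂ : 0 < w₂)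
    (hw : w₁ + w₂ = 1) (p₁ p₂ : ℝ≥0∞) :
    p₁ ^ w₁ * p₂ ^ w₂ ≤ ENNReal.ofReal w₁ * p₁ + ENNReal.ofReal w₂ * p₂ := by
  rcases eq_or_ne p₁ ⊤ with rfl | hp₁
  · simp [ENNReal.mul_top, hw₁]
  rcases eq_or_ne p₂ ⊤ with rfl | hp₂
  · simp [ENNReal.mul_top, hw₂]
  lift p₁ to ℝ≥0 using hp₁
  lift p₂ to ℝ≥0 using hp₂
  lift w₁ to ℝ≥0 using hw₁.le
  lift w₂ to ℝ≥0 using hw₂.le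
  have := NNReal.geom_mean_le_arith_mean2_weighted w₁ w₂ p₁ p₂ (by exact_mod_cast hw)
  rw [← ENNReal.coe_le_coe] at this
  simpa [ENNReal.coe_rpow_of_nonneg] using this

namespace Real

theorem volume_add_volume_le_volume_add_of_isCompact {C D : Set ℝ} (hC : IsCompact C)
    (hD : IsCompact D) (hC₀ : C.Nonempty) (hD₀ : D.Nonempty) :
    volume C + volume D ≤ volume (C + D) := by
  -- `C + {inf D}` and `{sup C} + D` lie in `C + D` and meet only at `sup C + inf D`.
  have hc := hC.sSup_mem hC₀
  have hd := hD.sInf_mem hD₀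
  have hdisj : AEDisjoint volume (C + {sInf D}) ({sSup C} + D) := by
    refine measure_mono_null (t := {sSup C + sInf D}) ?_ (measure_singleton _)
    rintro _ ⟨⟨x, hx, _, rfl, rfl⟩, ⟨_, rfl, y, hy, hxy⟩⟩
    have := le_csSup hC.bddAbove hx
    have := csInf_le hD.bddBelow hy
    simp only [mem_singleton_iff]
    linarith
  calc volume C + volume D = volume (C + {sInf D}) + volume ({sSup C} + D) := by
        simp [add_singleton, singleton_add]
    _ = volume ((C + {sInf D}) ∪ ({sSup C} + D)) :=
        (measure_union₀ (isCompact_singleton.add hD).measurableSet.nullMeasurableSet hdisj).symm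
    _ ≤ volume (C + D) := measure_mono <| union_subset
        (add_subset_add_left (singleton_subset_iff.2 hd))
        (add_subset_add_right (singleton_subset_iff.2 hc))

theorem volume_add_volume_le_volume_add {A B : Set ℝ} (hA : MeasurableSet A)
    (hB : MeasurableSet B) (hA₀ : A.Nonempty) (hB₀ : B.Nonempty) :
    volume A + volume B ≤ volume (A + B) := by
  obtain ⟨x, hx⟩ := hA₀
  obtain ⟨y, hy⟩ := hB₀
  rw [hA.measure_eq_iSup_isCompact, hB.measure_eq_iSup_isCompact]
  simp only [iSup_and']
  refine ENNReal.biSup_add_biSup_le' ⟨∅, empty_subset _, isCompact_empty⟩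
    ⟨∅, empty_subset _, isCompact_empty⟩ fun C ⟨hCA, hC⟩ D ⟨hDB, hD⟩ => ?_
  calc volume C + volume D ≤ volume (insert x C) + volume (insert y D) := by
        gcongr <;> exact subset_insert _ _
    _ ≤ volume (insert x C + insert y D) :=
        volume_add_volume_le_volume_add_of_isCompact (hC.insert x) (hD.insert y)
          (insert_nonempty _ _) (insert_nonempty _ _)
    _ ≤ volume (A + B) :=
        measure_mono <| add_subset_add (insert_subset hx hCA) (insert_subset hy hDB)

theorem ofReal_mul_volume_add_ofReal_mul_volume_le {A B : Set ℝ} (hA : MeasurableSet A)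
    (hB : MeasurableSet B) (hA₀ : A.Nonempty) (hB₀ : B.Nonempty) {a b : ℝ} (ha : 0 < a)
    (hb : 0 < b) :
    ENNReal.ofReal a * volume A + ENNReal.ofReal b * volume B ≤ volume (a • A + b • B) := by
  have := volume_add_volume_le_volume_add (hA.const_smul₀ a) (hB.const_smul₀ b) hA₀.smul_set
    hB₀.smul_set
  simpa [Measure.addHaar_smul, abs_of_pos ha, abs_of_pos hb] using this

end Real

theorem ENNReal.ofReal_mul_lt_self {s : ℝ} (hs : s < 1) {M : ℝ≥0∞} (hM₀ : M ≠ 0) (hM : M ≠ ⊤) :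
    ENNReal.ofReal s * M < M := by
  simpa using ENNReal.mul_lt_mul_left hM₀ hM (ENNReal.ofReal_lt_one.2 hs)

theorem lintegral_eq_mul_setLIntegral_Ioi_meas_mul_lt {α : Type*} [MeasurableSpace α]
    (μ : Measure α) {f : α → ℝ≥0∞} (hf : AEMeasurable f μ) (hf_top : ∀ x, f x ≠ ⊤)
    {M : ℝ≥0∞} (hM₀ : M ≠ 0) (hM : M ≠ ⊤) :
    ∫⁻ x, f x ∂μ = M * ∫⁻ s in Ioi (0 : ℝ), μ {x | ENNReal.ofReal s * M < f x} := by
  have hf_div : ∀ x, f x / M ≠ ⊤ := fun x => ENNReal.div_ne_top (hf_top x) hM₀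
  calc ∫⁻ x, f x ∂μ = M * ∫⁻ x, ENNReal.ofReal (f x / M).toReal ∂μ := by
        rw [← lintegral_const_mul' _ _ hM]
        simp_rw [ENNReal.ofReal_toReal (hf_div _), ENNReal.mul_div_cancel hM₀ hM]
    _ = M * ∫⁻ s in Ioi (0 : ℝ), μ {x | s < (f x / M).toReal} := by
        rw [lintegral_eq_lintegral_meas_lt μ (ae_of_all _ fun _ => ENNReal.toReal_nonneg)
          (hf.div_const M).ennreal_toReal]
    _ = M * ∫⁻ s in Ioi (0 : ℝ), μ {x | ENNReal.ofReal s * M < f x} := by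
        congr 1
        refine setLIntegral_congr_fun measurableSet_Ioi fun s hs => ?_
        simp_rw [← ENNReal.ofReal_lt_iff_lt_toReal hs.le (hf_div _),
          ENNReal.lt_div_iff_mul_lt (Or.inl hM₀) (Or.inl hM)]

theorem ofReal_mul_volume_superlevel_add_le {f g h : ℝ → ℝ≥0∞} (hf : Measurable f)
    (hg : Measurable g) {F G : ℝ≥0∞} (hfF : ⨆ x, f x = F) (hgG : ⨆ y, g y = G) (hF₀ : F ≠ 0)
    (hF : F ≠ ⊤) (hG₀ : G ≠ 0) (hG : G ≠ ⊤) {a b : ℝ} (ha : 0 < a) (hb : 0 < b)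
    (hab : a + b = 1) (hfgh : ∀ x y, f x ^ a * g y ^ b ≤ h (a * x + b * y)) (s : ℝ) :
    ENNReal.ofReal a * volume {x | ENNReal.ofReal s * F < f x}
        + ENNReal.ofReal b * volume {y | ENNReal.ofReal s * G < g y}
      ≤ volume {z | ENNReal.ofReal s * (F ^ a * G ^ b) < min (h z) (F ^ a * G ^ b)} := by
  rcases lt_or_ge s 1 with hs | hs
  · have superlevel_nonempty {φ : ℝ → ℝ≥0∞} {M : ℝ≥0∞} (hφM : ⨆ x, φ x = M) (hM₀ : M ≠ 0)
        (hM : M ≠ ⊤) : {x | ENNReal.ofReal s * M < φ x}.Nonempty := by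
      subst hφM; exact lt_iSup_iff.1 (ENNReal.ofReal_mul_lt_self hs hM₀ hM)
    refine (Real.ofReal_mul_volume_add_ofReal_mul_volume_le (measurableSet_lt measurable_const hf)
      (measurableSet_lt measurable_const hg) (superlevel_nonempty hfF hF₀ hF)
      (superlevel_nonempty hgG hG₀ hG) ha hb).trans (measure_mono ?_)
    rintro _ ⟨_, ⟨x, hx, rfl⟩, _, ⟨y, hy, rfl⟩, rfl⟩
    have hsc : ENNReal.ofReal s * (F ^ a * G ^ b)
        = (ENNReal.ofReal s * F) ^ a * (ENNReal.ofReal s * G) ^ b := by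
      rw [ENNReal.mul_rpow_of_nonneg _ _ ha.le, ENNReal.mul_rpow_of_nonneg _ _ hb.le,
        mul_mul_mul_comm, ← ENNReal.rpow_add_of_nonneg _ _ ha.le hb.le, hab, ENNReal.rpow_one]
    refine lt_min ?_ (ENNReal.ofReal_mul_lt_self hs ?_ ?_)
    · rw [hsc]
      exact (ENNReal.mul_lt_mul (ENNReal.rpow_lt_rpow hx ha) (ENNReal.rpow_lt_rpow hy hb)).trans_le
        (hfgh x y)
    · exact mul_ne_zero (by simp [hF₀, hF, ha]) (by simp [hG₀, hG, hb])
    · exact ENNReal.mul_ne_top (by simp [hF, ha.le]) (by simp [hG, hb.le])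
  · have superlevel_empty {φ : ℝ → ℝ≥0∞} {M : ℝ≥0∞} (hφM : ⨆ x, φ x = M) :
        {x | ENNReal.ofReal s * M < φ x} = ∅ :=
      eq_empty_of_forall_notMem fun x hx => hx.not_ge <| calc
        φ x ≤ M := hφM ▸ le_iSup φ x
        _ ≤ ENNReal.ofReal s * M := le_mul_of_one_le_left' (ENNReal.one_le_ofReal.2 hs)
    simp [superlevel_empty hfF, superlevel_empty hgG]

theorem prekopa_leindler_real {f g h : ℝ → ℝ≥0∞} (hf : Measurable f) (hg : Measurable g)
    (hh : Measurable h) (hf_bdd : ⨆ x, f x ≠ ⊤) (hg_bdd : ⨆ y, g y ≠ ⊤) {a b : ℝ} (ha : 0 < a)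
    (hb : 0 < b) (hab : a + b = 1) (hfgh : ∀ x y, f x ^ a * g y ^ b ≤ h (a * x + b * y)) :
    (∫⁻ x, f x) ^ a * (∫⁻ y, g y) ^ b ≤ ∫⁻ z, h z := by
  set F := ⨆ x, f x with hfF
  set G := ⨆ y, g y with hgG
  rcases eq_or_ne F 0 with hF₀ | hF₀
  · simp [ENNReal.iSup_eq_zero.1 hF₀, ha]
  rcases eq_or_ne G 0 with hG₀ | hG₀
  · simp [ENNReal.iSup_eq_zero.1 hG₀, hb]
  set c := F ^ a * G ^ b
  have hc₀ : c ≠ 0 := mul_ne_zero (by simp [hF₀, hf_bdd, ha]) (by simp [hG₀, hg_bdd, hb])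
  have hc : c ≠ ⊤ := ENNReal.mul_ne_top (by simp [hf_bdd, ha.le]) (by simp [hg_bdd, hb.le])
  have layer_f := lintegral_eq_mul_setLIntegral_Ioi_meas_mul_lt volume hf.aemeasurable
    (fun x => ne_top_of_le_ne_top hf_bdd (le_iSup f x)) hF₀ hf_bdd
  have layer_g := lintegral_eq_mul_setLIntegral_Ioi_meas_mul_lt volume hg.aemeasurable
    (fun y => ne_top_of_le_ne_top hg_bdd (le_iSup g y)) hG₀ hg_bdd
  have layer_h := lintegral_eq_mul_setLIntegral_Ioi_meas_mul_lt volume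
    (hh.min measurable_const).aemeasurable (fun z => ne_top_of_le_ne_top hc (min_le_right _ c))
    hc₀ hc
  set If := ∫⁻ s in Ioi (0 : ℝ), volume {x | ENNReal.ofReal s * F < f x}
  set Ig := ∫⁻ s in Ioi (0 : ℝ), volume {y | ENNReal.ofReal s * G < g y}
  calc (∫⁻ x, f x) ^ a * (∫⁻ y, g y) ^ b = c * (If ^ a * Ig ^ b) := by
        rw [layer_f, layer_g, ENNReal.mul_rpow_of_nonneg _ _ ha.le,
          ENNReal.mul_rpow_of_nonneg _ _ hb.le, mul_mul_mul_comm]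
    _ ≤ c * (ENNReal.ofReal a * If + ENNReal.ofReal b * Ig) := by
        gcongr; exact ENNReal.geom_mean_le_arith_mean2_weighted ha hb hab If Ig
    _ ≤ c * ∫⁻ s in Ioi (0 : ℝ), (ENNReal.ofReal a * volume {x | ENNReal.ofReal s * F < f x}
          + ENNReal.ofReal b * volume {y | ENNReal.ofReal s * G < g y}) := by
        rw [← lintegral_const_mul' _ _ ENNReal.ofReal_ne_top,
          ← lintegral_const_mul' _ _ ENNReal.ofReal_ne_top]
        gcongr
        exact le_lintegral_add _ _
    _ ≤ c * ∫⁻ s in Ioi (0 : ℝ), volume {z | ENNReal.ofReal s * c < min (h z) c} := by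
        gcongr with s
        exact ofReal_mul_volume_superlevel_add_le hf hg hfF.symm hgG.symm hF₀ hf_bdd hG₀ hg_bdd
          ha hb hab hfgh s
    _ = ∫⁻ z, min (h z) c := layer_h.symm
    _ ≤ ∫⁻ z, h z := lintegral_mono fun z => min_le_left _ _

/-- `(y, (r, u)) ↦ (Fin.cons r y, u)` -/
def Fin.consProdEquivL (n : ℕ) (E : Type*) [AddCommGroup E] [Module ℝ E] [TopologicalSpace E] :
    ((Fin n → ℝ) × (ℝ × E)) ≃L[ℝ] ((Fin (n + 1) → ℝ) × E) :=
  (ContinuousLinearEquiv.prodAssoc ℝ (Fin n → ℝ) ℝ E).symm.trans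
    (((ContinuousLinearEquiv.prodComm ℝ (Fin n → ℝ) ℝ).trans
      (Fin.consEquivL ℝ fun _ : Fin (n + 1) => ℝ)).prodCongr (ContinuousLinearEquiv.refl ℝ E))

theorem volume_eq_lintegral_volume_cons {n : ℕ} {S : Set (Fin (n + 1) → ℝ)}
    (hS : MeasurableSet S) :
    volume S = ∫⁻ r, volume {y : Fin n → ℝ | Fin.cons r y ∈ S} := by
  have hmp := (volume_preserving_piFinSuccAbove (fun _ : Fin (n + 1) => ℝ) 0).symm
  rw [← hmp.measure_preimage hS.nullMeasurableSet, Measure.volume_eq_prod,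
    Measure.prod_apply (hmp.measurable hS)]
  simp only [MeasurableEquiv.piFinSuccAbove_symm_apply, Fin.insertNthEquiv_zero]
  rfl

theorem volume_slice_rpow_mul_rpow_le {E : Type*} [AddCommGroup E] [Module ℝ E]
    [TopologicalSpace E] [T2Space E] (n : ℕ) {K : Set ((Fin n → ℝ) × E)} (hK : Convex ℝ K)
    (hKc : IsCompact K) (t s : E) {a b : ℝ} (ha : 0 < a) (hb : 0 < b) (hab : a + b = 1) :
    volume {x | (x, t) ∈ K} ^ a * volume {x | (x, s) ∈ K} ^ b
      ≤ volume {x | (x, a • t + b • s) ∈ K} := by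
  induction n generalizing E with
  | zero =>
    rcases eq_empty_or_nonempty {x : Fin 0 → ℝ | (x, t) ∈ K} with ht | ⟨x, hx⟩
    · simp [ht, ha]
    rcases eq_empty_or_nonempty {y : Fin 0 → ℝ | (y, s) ∈ K} with hs | ⟨y, hy⟩
    · simp [hs, hb]
    have volume_eq_one {S : Set (Fin 0 → ℝ)} (hS : S.Nonempty) : volume S = 1 := by
      simp [hS.eq_univ, volume_pi]
    rw [volume_eq_one ⟨x, hx⟩, volume_eq_one ⟨y, hy⟩,
      volume_eq_one ⟨a • x + b • y, hK hx hy ha.le hb.le hab⟩]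
    simp
  | succ n ih =>
    set K' := Fin.consProdEquivL n E ⁻¹' K
    have hK' : Convex ℝ K' :=
      hK.linear_preimage (Fin.consProdEquivL n E).toLinearEquiv.toLinearMap
    have hK'c : IsCompact K' := (Fin.consProdEquivL n E).toHomeomorph.isCompact_preimage.2 hKc
    have hslice (u : E) : volume {x | (x, u) ∈ K} = ∫⁻ r, volume {y | (y, (r, u)) ∈ K'} :=
      volume_eq_lintegral_volume_cons
        (hKc.isClosed.preimage (continuous_id.prodMk continuous_const)).measurableSet
    have hmeas (u : E) : Measurable fun r => volume {y | (y, (r, u)) ∈ K'} :=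
      measurable_measure_prodMk_left (hK'c.isClosed.preimage
        (continuous_snd.prodMk (continuous_fst.prodMk continuous_const))).measurableSet
    have hbdd (u : E) : ⨆ r, volume {y | (y, (r, u)) ∈ K'} ≠ ⊤ :=
      ne_top_of_le_ne_top (hK'c.image continuous_fst).measure_lt_top.ne
        (iSup_le fun r => measure_mono fun y hy => ⟨_, hy, rfl⟩)
    rw [hslice, hslice, hslice]
    refine prekopa_leindler_real (hmeas t) (hmeas s) (hmeas _) (hbdd t) (hbdd s) ha hb hab
      fun r₁ r₂ => ?_
    simpa using ih hK' hK'c (r₁, t) (r₂, s)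

theorem brunn_minkowski_multiplicative_general (n m : ℕ) (K : Set ((Fin n → ℝ) × (Fin m → ℝ)))
    (hK : Convex ℝ K) (hKc : IsCompact K)
    (t s : Fin m → ℝ)
    (a b : ℝ) (ha : 0 ≤ a) (hb : 0 ≤ b) (hab : a + b = 1) :
    (volume {x : Fin n → ℝ | (x, t) ∈ K}) ^ a * (volume {x : Fin n → ℝ | (x, s) ∈ K}) ^ b
      ≤ volume {x : Fin n → ℝ | (x, a • t + b • s) ∈ K} := by
  rcases ha.eq_or_lt with rfl | ha
  · simp [show b = 1 by linarith]
  rcases hb.eq_or_lt with rfl | hb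
  · simp [show a = 1 by linarith]
  exact volume_slice_rpow_mul_rpow_le n hK hKc t s ha hb hab

/-- **Multiplicative Brunn–Minkowski.** If `K ⊆ ℝⁿ × ℝᵐ` is a convex body (compact convex
with nonempty interior) and `K_t = {x | (x, t) ∈ K}` denotes its vertical slices, then
`t ↦ log vol_n (K_t)` is concave on the projection of `K` to `ℝᵐ` (with `log 0 = -∞`),
expressed multiplicatively: for `t, s` in the projection and `a + b = 1`, `a, b ≥ 0`,
`vol (K_t) ^ a * vol (K_s) ^ b ≤ vol (K_{a t + b s})`. -/
theorem brunn_minkowski_multiplicative (n m : ℕ) (K : Set ((Fin n → ℝ) × (Fin m → ℝ)))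
    (hK : Convex ℝ K) (hKc : IsCompact K) (hKi : (interior K).Nonempty)
    (t s : Fin m → ℝ) (ht : t ∈ Prod.snd '' K) (hs : s ∈ Prod.snd '' K)
    (a b : ℝ) (ha : 0 ≤ a) (hb : 0 ≤ b) (hab : a + b = 1) :
    (volume {x : Fin n → ℝ | (x, t) ∈ K}) ^ a * (volume {x : Fin n → ℝ | (x, s) ∈ K}) ^ b
      ≤ volume {x : Fin n → ℝ | (x, a • t + b • s) ∈ K} :=
  brunn_minkowski_multiplicative_general n m K hK hKc t s a b ha hb hab
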